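/- arXiv:2402.05052 — 7 statements merged into one kernel-verified Lean document; each statement's English description precedes it below -/
import Mathlib

section
/- Let G be a simple graph on a finite vertex set. If i ≠ j are two vertices with equal closed neighborhoods, i.e., {i} ∪ N(i) = {j} ∪ N(j), then {i} ∪ Ψ(i) = {j} ∪ Ψ(j). -/
/-- The closed neighborhood of a vertex: the vertex together with its neighbors. -/
def closedNbhd {V : Type*} (G : SimpleGraph V) (i : V) : Set V :=
  {i} ∪ G.neighborSet i

/-- The intimate neighbor set of a vertex `i`: vertices `j ≠ i` adjacent to `i`
and to every other neighbor of `i`. -/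
def intimateSet {V : Type*} (G : SimpleGraph V) (i : V) : Set V :=
  {j | j ≠ i ∧ G.Adj i j ∧ ∀ k, G.Adj i k → k ≠ j → G.Adj j k}

lemma mem_closedNbhd_iff {V : Type*} (G : SimpleGraph V) (i x : V) :
    x ∈ closedNbhd G i ↔ x = i ∨ G.Adj i x := by
  simp [closedNbhd, SimpleGraph.mem_neighborSet]

lemma intimate_subset_aux {V : Type*}
    (G : SimpleGraph V) (i j : V) (hij : i ≠ j)
    (h : closedNbhd G i = closedNbhd G j) :
    ({i} ∪ intimateSet G i : Set V) ⊆ {j} ∪ intimateSet G j := by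
  have key : ∀ x, (x = i ∨ G.Adj i x) ↔ (x = j ∨ G.Adj j x) := by
    intro x
    rw [← mem_closedNbhd_iff, ← mem_closedNbhd_iff, h]
  have hadj : G.Adj j i := by
    rcases (key i).mp (Or.inl rfl) with h1 | h1
    · exact absurd h1 hij
    · exact h1
  intro x hx
  rcases hx with hx | hx
  · -- x = i
    rcases hx with rfl
    right
    refine ⟨hij, hadj, ?_⟩
    intro k hk hki
    rcases (key k).mpr (Or.inr hk) with rfl | h2
    · exact absurd rfl hki
    · exact h2
  · obtain ⟨hxi, hix, hall⟩ := hx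
    by_cases hxj : x = j
    · exact Or.inl hxj
    · right
      refine ⟨hxj, ?_, ?_⟩
      · rcases (key x).mp (Or.inr hix) with rfl | h2
        · exact absurd rfl hxj
        · exact h2
      · intro k hk hkx
        by_cases hki : k = i
        · subst hki; exact hix.symm
        · rcases (key k).mpr (Or.inr hk) with rfl | h2
          · exact absurd rfl hki
          · exact hall k h2 hkx

/-- If i ≠ j have equal closed neighborhoods, then {i} ∪ Ψ(i) = {j} ∪ Ψ(j). -/
theorem intimate_eq_of_closedNbhd_eq {V : Type*} [Fintype V]
    (G : SimpleGraph V) (i j : V) (hij : i ≠ j)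
    (h : closedNbhd G i = closedNbhd G j) :
    {i} ∪ intimateSet G i = {j} ∪ intimateSet G j := by
  apply Set.Subset.antisymm
  · exact intimate_subset_aux G i j hij h
  · exact intimate_subset_aux G j i hij.symm h.symm
end

section
/- Let G be a simple graph on the vertex set {1,…,n} and let A be an n×n real matrix that respects G, i.e., A_{ij} = 0 for every pair i ≠ j such that vertex j is not adjacent to some vertex in {i} ∪ (N(i) \ {j}). Then for every natural number k ≥ 1, the matrix power A^k also respects G: (A^k)_{ij} = 0 for every pair i ≠ j such that vertex j is not adjacent to some vertex in {i} ∪ (N(i) \ {j}). -/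
/-- A matrix `A` respects the graph `G` if `A i j = 0` for every pair `i ≠ j`
such that vertex `j` is not adjacent to some vertex in `{i} ∪ (N(i) \ {j})`. -/
def Respects {n : ℕ} (G : SimpleGraph (Fin n)) (A : Matrix (Fin n) (Fin n) ℝ) : Prop :=
  ∀ i j : Fin n, i ≠ j →
    (∃ m : Fin n, (m = i ∨ (G.Adj i m ∧ m ≠ j)) ∧ ¬ G.Adj j m) → A i j = 0

private lemma witness_trans {n : ℕ} (G : SimpleGraph (Fin n)) (i l j : Fin n)
    (hij : i ≠ j) (hli : l ≠ i) (hlj : l ≠ j)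
    (h : ∃ m : Fin n, (m = i ∨ (G.Adj i m ∧ m ≠ j)) ∧ ¬ G.Adj j m) :
    (∃ m : Fin n, (m = i ∨ (G.Adj i m ∧ m ≠ l)) ∧ ¬ G.Adj l m) ∨
    (∃ m : Fin n, (m = l ∨ (G.Adj l m ∧ m ≠ j)) ∧ ¬ G.Adj j m) := by
  by_contra hc
  push_neg at hc
  obtain ⟨h1, h2⟩ := hc
  obtain ⟨m, hm, hjm⟩ := h
  apply hjm
  rcases hm with rfl | ⟨him, hmj⟩
  · exact h2 m (Or.inr ⟨h1 m (Or.inl rfl), hij⟩)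
  · by_cases hml : m = l
    · subst hml; exact h2 m (Or.inl rfl)
    · exact h2 m (Or.inr ⟨h1 m (Or.inr ⟨him, hml⟩), hmj⟩)

/-- If A respects G, then every power A^k with k ≥ 1 respects G. -/
theorem pow_respects {n : ℕ} (G : SimpleGraph (Fin n)) (A : Matrix (Fin n) (Fin n) ℝ)
    (hA : Respects G A) :
    ∀ k : ℕ, 1 ≤ k → Respects G (A ^ k) := by
  have key : ∀ m : ℕ, Respects G (A ^ (m + 1)) := by
    intro m
    induction m with
    | zero => simpa [pow_one] using hA
    | succ m ih =>
      intro i j hij hw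
      rw [pow_succ', Matrix.mul_apply]
      apply Finset.sum_eq_zero
      intro l _
      by_cases hlj : l = j
      · subst hlj; rw [hA i l hij hw, zero_mul]
      · by_cases hli : l = i
        · subst hli; rw [ih l j hij hw, mul_zero]
        · rcases witness_trans G i l j hij hli hlj hw with h | h
          · rw [hA i l (Ne.symm hli) h, zero_mul]
          · rw [ih l j hlj h, mul_zero]
  intro k hk
  obtain ⟨m, rfl⟩ := Nat.exists_eq_add_of_le hk
  simpa [Nat.add_comm] using key m
end

section
/- Let G be a simple graph on the vertex set {1,…,n} and let A be an invertible n×n real matrix. Suppose A_{ij} = 0 for each pair i ≠ j such that vertex j is not adjacent to some vertex in {i} ∪ (N(i) \ {j}). Then for every such pair i ≠ j, the inverse matrix also satisfies (A⁻¹)_{ij} = 0. -/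
namespace InvRespectsAux

variable {n : ℕ} (G : SimpleGraph (Fin n))

/-- The support preorder: `R i j` iff every vertex in `{i} ∪ (N(i) \ {j})` is adjacent to `j`,
or `i = j`. -/
def R (i j : Fin n) : Prop :=
  i = j ∨ ∀ m : Fin n, (m = i ∨ (G.Adj i m ∧ m ≠ j)) → G.Adj j m

lemma R_refl (i : Fin n) : R G i i := Or.inl rfl

lemma R_trans {i j k : Fin n} (h1 : R G i j) (h2 : R G j k) : R G i k := by
  rcases h1 with rfl | h1
  · exact h2
  rcases h2 with rfl | h2
  · exact Or.inr h1
  by_cases hik : i = k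
  · exact Or.inl hik
  refine Or.inr ?_
  rintro m (rfl | ⟨him, hmk⟩)
  · -- m = i : need Adj k i
    have hji : G.Adj j m := h1 m (Or.inl rfl)
    exact h2 m (Or.inr ⟨hji, hik⟩)
  · by_cases hmj : m = j
    · subst hmj
      exact h2 m (Or.inl rfl)
    · have hjm : G.Adj j m := h1 m (Or.inr ⟨him, hmj⟩)
      exact h2 m (Or.inr ⟨hjm, hmk⟩)

/-- Matrices supported on `R`. -/
def Supp (M : Matrix (Fin n) (Fin n) ℝ) : Prop :=
  ∀ i j : Fin n, ¬ R G i j → M i j = 0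

lemma supp_iff_respects (M : Matrix (Fin n) (Fin n) ℝ) : Supp G M ↔ Respects G M := by
  constructor
  · intro h i j hij ⟨m, hm, hadj⟩
    apply h
    rintro (rfl | hR)
    · exact hij rfl
    · exact hadj (hR m hm)
  · intro h i j hR
    rw [R] at hR
    push_neg at hR
    obtain ⟨hij, m, hm, hadj⟩ := hR
    exact h i j hij ⟨m, hm, hadj⟩

lemma supp_one : Supp G (1 : Matrix (Fin n) (Fin n) ℝ) := by
  intro i j hR
  have : i ≠ j := fun h => hR (h ▸ R_refl G i)
  simp [Matrix.one_apply_ne this]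

lemma supp_mul {M N : Matrix (Fin n) (Fin n) ℝ} (hM : Supp G M) (hN : Supp G N) :
    Supp G (M * N) := by
  intro i j hR
  rw [Matrix.mul_apply]
  apply Finset.sum_eq_zero
  intro k _
  by_cases hik : R G i k
  · have hkj : ¬ R G k j := fun h => hR (R_trans G hik h)
    rw [hN k j hkj, mul_zero]
  · rw [hM i k hik, zero_mul]

lemma supp_smul {M : Matrix (Fin n) (Fin n) ℝ} (c : ℝ) (hM : Supp G M) :
    Supp G (c • M) := by
  intro i j hR
  simp [hM i j hR]

lemma supp_pow {A : Matrix (Fin n) (Fin n) ℝ} (hA : Supp G A) (k : ℕ) : Supp G (A ^ k) := by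
  induction k with
  | zero => simpa using supp_one G
  | succ k ih => rw [pow_succ]; exact supp_mul G ih hA

lemma supp_sum {s : Finset ℕ} {f : ℕ → Matrix (Fin n) (Fin n) ℝ}
    (hf : ∀ k ∈ s, Supp G (f k)) : Supp G (∑ k ∈ s, f k) := by
  intro i j hR
  rw [Matrix.sum_apply]
  exact Finset.sum_eq_zero fun k hk => hf k hk i j hR

lemma supp_aeval {A : Matrix (Fin n) (Fin n) ℝ} (hA : Supp G A) (p : Polynomial ℝ) :
    Supp G (Polynomial.aeval A p) := by
  rw [Polynomial.aeval_eq_sum_range]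
  exact supp_sum G fun k _ => supp_smul G _ (supp_pow G hA k)

end InvRespectsAux

/-- If an invertible matrix A respects G, then A⁻¹ respects G as well. -/
theorem inv_respects {n : ℕ} (G : SimpleGraph (Fin n)) (A : Matrix (Fin n) (Fin n) ℝ)
    (hdet : A.det ≠ 0) (hA : Respects G A) :
    Respects G A⁻¹ := by
  open InvRespectsAux in
  rw [← supp_iff_respects] at hA ⊢
  set p := A.charpoly with hp
  have hc0 : p.coeff 0 ≠ 0 := by
    intro h
    apply hdet
    rw [Matrix.det_eq_sign_charpoly_coeff, ← hp, h, mul_zero]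
  have hchar : Polynomial.aeval A p = 0 := Matrix.aeval_self_charpoly A
  have hsplit : Polynomial.aeval A (p.divX) * A + (p.coeff 0) • (1 : Matrix (Fin n) (Fin n) ℝ)
      = 0 := by
    have := congrArg (Polynomial.aeval A) (Polynomial.divX_mul_X_add p)
    rw [map_add, map_mul, Polynomial.aeval_X, Polynomial.aeval_C] at this
    rw [Algebra.algebraMap_eq_smul_one] at this
    rw [this, hchar]
  have hB : ((-(p.coeff 0))⁻¹ • Polynomial.aeval A (p.divX)) * A = 1 := by
    have h1 : Polynomial.aeval A (p.divX) * A = -((p.coeff 0) • (1 : Matrix (Fin n) (Fin n) ℝ)) := by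
      linear_combination (norm := module) hsplit
    rw [Matrix.smul_mul, h1, smul_neg, ← neg_smul, smul_smul]
    have : -(-p.coeff 0)⁻¹ * p.coeff 0 = 1 := by field_simp
    rw [this, one_smul]
  rw [Matrix.inv_eq_left_inv hB]
  exact supp_smul G _ (supp_aeval G hA _)
end

section
/- Let M and M̂ be simple graphs on the vertex set {1,…,n}, and let v : ℝⁿ → ℝⁿ be a C¹ diffeomorphism. Suppose there is a permutation π of {1,…,n} such that for all i, j: i and j are adjacent in M if and only if π(i) and π(j) are adjacent in M̂. Suppose further that for every ordered pair of distinct indices (k, l) with k and l not adjacent in M̂, and every x ∈ ℝⁿ: (i) (∂v_i/∂x_k)(x) · (∂v_i/∂x_l)(x) = 0 for every index i, and (ii) (∂v_i/∂x_k)(x) · (∂v_j/∂x_l)(x) = 0 for every pair of indices i, j adjacent in M. Then for every ordered pair of distinct indices (k, l) with k and l not adjacent in M̂ and every index i: either ∂v_i/∂x_k vanishes identically on ℝⁿ, or ∂v_i/∂x_l vanishes identically on ℝⁿ. -/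
/-!
At every point the Jacobian is invertible, so some permutation `τ` has all entries
`∂v_r/∂x_{τ r}` nonzero. Hypothesis (ii) makes `τ` a homomorphism `M → M̂`; a bijective
homomorphism between graphs with equally many edges is an isomorphism. Then (i) and (ii) force
the columns in which the rows of the closed neighbourhood `N[i]` have nonzero entries to be exactly
`τ(N[i])`, a set of size `|N[i]|` independent of the point. By continuity this set of columns can
only grow near a point, so it is locally constant, hence constant on the connected space `ℝⁿ`.
If `∂v_i/∂x_k ≠ 0` at `a` and `∂v_i/∂x_l ≠ 0` at `b`, then column `k` is met at `b` by a row of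
`N[i]`, contradicting (i) or (ii) at `b`.
-/

/-- The (i,j) entry of the Jacobian of `f` at `x`: the j-th partial derivative
of the i-th component of `f`. -/
noncomputable def pd {n : ℕ} (f : (Fin n → ℝ) → (Fin n → ℝ)) (i j : Fin n)
    (x : Fin n → ℝ) : ℝ :=
  fderiv ℝ f x (Pi.single j 1) i

open Finset Filter Topology

theorem SimpleGraph.Hom.adj_of_adj_of_bijective {V W : Type*} [Finite V] [Finite W]
    {G : SimpleGraph V} {G' : SimpleGraph W} (e : G ≃g G') (f : G →g G')
    (hf : Function.Bijective f) {a b : V} (h : G'.Adj (f a) (f b)) : G.Adj a b := by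
  have hsurj : Function.Surjective f.mapEdgeSet :=
    ((mapEdgeSet.injective f hf.1).bijective_of_nat_card_le
      (Nat.card_congr e.mapEdgeSet).ge).2
  obtain ⟨⟨s, hs⟩, hfs⟩ := hsurj ⟨s(f a, f b), h⟩
  obtain rfl : s = s(a, b) := Sym2.map.injective hf.1 (congrArg Subtype.val hfs)
  exact hs

theorem Matrix.exists_perm_forall_ne_zero_of_det_ne_zero {n R : Type*} [Fintype n]
    [DecidableEq n] [CommRing R] {A : Matrix n n R} (hA : A.det ≠ 0) :
    ∃ σ : Equiv.Perm n, ∀ i, A i (σ i) ≠ 0 := by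
  by_contra! h
  refine hA ((det_apply A).trans (Finset.sum_eq_zero fun σ _ => ?_))
  obtain ⟨i, hi⟩ := h σ⁻¹
  rw [Finset.prod_eq_zero (Finset.mem_univ (σ⁻¹ i)) (by simpa using hi), smul_zero]

theorem isLocallyConstant_of_eventually_subset {X α : Type*} [TopologicalSpace X]
    {f : X → Finset α} (hsub : ∀ x, ∀ᶠ y in 𝓝 x, f x ⊆ f y)
    (hcard : ∀ x y, #(f y) ≤ #(f x)) : IsLocallyConstant f :=
  (IsLocallyConstant.iff_eventually_eq f).2 fun x =>
    (hsub x).mono fun y hy => (eq_of_subset_of_card_le hy (hcard x y)).symm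

namespace Matrix

variable {V R : Type*} [Fintype V] [CommRing R] {M Mhat : SimpleGraph V}

def RespectsNonAdj (M Mhat : SimpleGraph V) (A : Matrix V V R) : Prop :=
  ∀ k l, k ≠ l → ¬ Mhat.Adj k l → ∀ i j, (i = j ∨ M.Adj i j) → A i k * A j l = 0

open Classical in
noncomputable def nbhdSupport (M : SimpleGraph V) (A : Matrix V V R) (i : V) : Finset V :=
  {c | ∃ j, (j = i ∨ M.Adj j i) ∧ A j c ≠ 0}

theorem mem_nbhdSupport {A : Matrix V V R} {i c : V} :
    c ∈ A.nbhdSupport M i ↔ ∃ j, (j = i ∨ M.Adj j i) ∧ A j c ≠ 0 := by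
  simp [nbhdSupport]

section

variable [DecidableEq V] [NoZeroDivisors R]

open Classical in
theorem card_nbhdSupport {A : Matrix V V R} (hA : A.det ≠ 0) (hAM : A.RespectsNonAdj M Mhat)
    (e : M ≃g Mhat) (i : V) : #(A.nbhdSupport M i) = #{j | j = i ∨ M.Adj j i} := by
  obtain ⟨τ, hτ⟩ := exists_perm_forall_ne_zero_of_det_ne_zero hA
  have hhom : ∀ a b, M.Adj a b → Mhat.Adj (τ a) (τ b) := fun a b hab => by
    by_contra hn
    exact mul_ne_zero (hτ a) (hτ b) (hAM _ _ (τ.injective.ne hab.ne) hn a b (.inr hab))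
  have hreflect : ∀ a b, Mhat.Adj (τ a) (τ b) → M.Adj a b := fun a b =>
    SimpleGraph.Hom.adj_of_adj_of_bijective (f := ⟨τ, hhom _ _⟩) e τ.bijective
  have himage : A.nbhdSupport M i = image τ {j | j = i ∨ M.Adj j i} := by
    ext c
    simp only [mem_nbhdSupport, mem_image, mem_filter, mem_univ, true_and]
    constructor
    · rintro ⟨j, hj, hjc⟩
      refine ⟨τ.symm c, ?_, τ.apply_symm_apply c⟩
      by_contra hn
      have hne : c ≠ τ i := fun h => hn (.inl (by simp [h]))
      have hnadj : ¬ Mhat.Adj c (τ i) := fun h => hn (.inr (hreflect _ _ (by simpa using h)))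
      exact mul_ne_zero hjc (hτ i) (hAM c (τ i) hne hnadj j i hj)
    · rintro ⟨j, hj, rfl⟩
      exact ⟨j, hj, hτ j⟩
  rw [himage, card_image_of_injective _ τ.injective]

end

variable {X : Type*} [TopologicalSpace X] [TopologicalSpace R] [T1Space R]

theorem eventually_nbhdSupport_subset {J : X → Matrix V V R} (hJ : Continuous J) (x : X)
    (i : V) : ∀ᶠ y in 𝓝 x, (J x).nbhdSupport M i ⊆ (J y).nbhdSupport M i := by
  have hne : ∀ᶠ y in 𝓝 x, ∀ j c, J x j c ≠ 0 → J y j c ≠ 0 := by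
    simp only [eventually_all]
    exact fun j c h => (hJ.matrix_elem j c).continuousAt.eventually_ne h
  filter_upwards [hne] with y hy c
  simp only [mem_nbhdSupport]
  exact fun ⟨j, hj, hjc⟩ => ⟨j, hj, hy j c hjc⟩

theorem forall_apply_eq_zero_or_forall_apply_eq_zero [DecidableEq V] [NoZeroDivisors R]
    [PreconnectedSpace X] {J : X → Matrix V V R} (hJ : Continuous J) (hdet : ∀ x, (J x).det ≠ 0)
    (hresp : ∀ x, (J x).RespectsNonAdj M Mhat) (e : M ≃g Mhat) {k l : V} (hkl : k ≠ l)
    (hnadj : ¬ Mhat.Adj k l) (i : V) : (∀ x, J x i k = 0) ∨ (∀ x, J x i l = 0) := by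
  have hconst : IsLocallyConstant fun x => (J x).nbhdSupport M i :=
    isLocallyConstant_of_eventually_subset (eventually_nbhdSupport_subset hJ · i)
      fun x y => by
        rw [card_nbhdSupport (hdet x) (hresp x) e, card_nbhdSupport (hdet y) (hresp y) e]
  by_contra! ⟨⟨a, ha⟩, ⟨b, hb⟩⟩
  have hk : k ∈ (J b).nbhdSupport M i :=
    hconst.apply_eq_of_preconnectedSpace a b ▸ mem_nbhdSupport.2 ⟨i, .inl rfl, ha⟩
  obtain ⟨j, hj, hjk⟩ := mem_nbhdSupport.1 hk
  exact mul_ne_zero hjk hb (hresp b k l hkl hnadj j i hj)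

end Matrix

section

variable {n : ℕ}

theorem continuous_pd {f : (Fin n → ℝ) → (Fin n → ℝ)} (hf : ContDiff ℝ 1 f) (i j : Fin n) :
    Continuous (pd f i j) :=
  (continuous_apply i).comp ((hf.continuous_fderiv one_ne_zero).clm_apply continuous_const)

theorem toMatrix'_fderiv_apply (f : (Fin n → ℝ) → (Fin n → ℝ)) (x : Fin n → ℝ) (i j : Fin n) :
    LinearMap.toMatrix' (fderiv ℝ f x : (Fin n → ℝ) →ₗ[ℝ] (Fin n → ℝ)) i j = pd f i j x := by
  simp [LinearMap.toMatrix'_apply, pd]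

theorem det_toMatrix'_fderiv_ne_zero {v w : (Fin n → ℝ) → (Fin n → ℝ)} {x : Fin n → ℝ}
    (hv : DifferentiableAt ℝ v x) (hw : DifferentiableAt ℝ w (v x))
    (hleft : Function.LeftInverse w v) :
    (LinearMap.toMatrix' (fderiv ℝ v x : (Fin n → ℝ) →ₗ[ℝ] (Fin n → ℝ))).det ≠ 0 := by
  refine Matrix.det_ne_zero_of_left_inverse
    (B := LinearMap.toMatrix' (fderiv ℝ w (v x) : (Fin n → ℝ) →ₗ[ℝ] (Fin n → ℝ))) ?_
  have hcomp : (fderiv ℝ w (v x)).comp (fderiv ℝ v x) = .id ℝ _ := by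
    rw [← fderiv_comp x hw hv, hleft.comp_eq_id, fderiv_id]
  rw [← LinearMap.toMatrix'_mul, ← LinearMap.toMatrix'_id]
  exact congrArg _ (congrArg ContinuousLinearMap.toLinearMap hcomp)

end

theorem partials_do_not_switch_support_general
    {n : ℕ} (M Mhat : SimpleGraph (Fin n))
    (v w : (Fin n → ℝ) → (Fin n → ℝ))
    (hv : ContDiff ℝ 1 v) (hw : ContDiff ℝ 1 w)
    (hleft : Function.LeftInverse w v)
    (π : Equiv.Perm (Fin n))
    (hiso : ∀ i j : Fin n, M.Adj i j ↔ Mhat.Adj (π i) (π j))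
    (h1 : ∀ k l : Fin n, k ≠ l → ¬ Mhat.Adj k l →
      ∀ x : Fin n → ℝ, ∀ i : Fin n, pd v i k x * pd v i l x = 0)
    (h2 : ∀ k l : Fin n, k ≠ l → ¬ Mhat.Adj k l →
      ∀ x : Fin n → ℝ, ∀ i j : Fin n, M.Adj i j → pd v i k x * pd v j l x = 0) :
    ∀ k l : Fin n, k ≠ l → ¬ Mhat.Adj k l → ∀ i : Fin n,
      (∀ x : Fin n → ℝ, pd v i k x = 0) ∨ (∀ x : Fin n → ℝ, pd v i l x = 0) := by
  let J x := LinearMap.toMatrix' (fderiv ℝ v x : (Fin n → ℝ) →ₗ[ℝ] (Fin n → ℝ))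
  have hJ : Continuous J := continuous_matrix fun r c => by
    simpa only [J, toMatrix'_fderiv_apply] using continuous_pd hv r c
  have hdet x : (J x).det ≠ 0 :=
    det_toMatrix'_fderiv_ne_zero (hv.differentiable one_ne_zero x)
      (hw.differentiable one_ne_zero (v x)) hleft
  have hresp x : (J x).RespectsNonAdj M Mhat := by
    rintro k l hkl hnadj r s (rfl | hrs)
    all_goals simp only [J, toMatrix'_fderiv_apply]
    exacts [h1 k l hkl hnadj x r, h2 k l hkl hnadj x r s hrs]
  intro k l hkl hnadj i
  simpa only [J, toMatrix'_fderiv_apply] using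
    Matrix.forall_apply_eq_zero_or_forall_apply_eq_zero hJ hdet hresp
      ⟨π, (hiso _ _).symm⟩ hkl hnadj i

theorem partials_do_not_switch_support
    {n : ℕ} (M Mhat : SimpleGraph (Fin n))
    (v w : (Fin n → ℝ) → (Fin n → ℝ))
    (hv : ContDiff ℝ 1 v) (hw : ContDiff ℝ 1 w)
    (hleft : Function.LeftInverse w v) (hright : Function.RightInverse w v)
    (π : Equiv.Perm (Fin n))
    (hiso : ∀ i j : Fin n, M.Adj i j ↔ Mhat.Adj (π i) (π j))
    (h1 : ∀ k l : Fin n, k ≠ l → ¬ Mhat.Adj k l →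
      ∀ x : Fin n → ℝ, ∀ i : Fin n, pd v i k x * pd v i l x = 0)
    (h2 : ∀ k l : Fin n, k ≠ l → ¬ Mhat.Adj k l →
      ∀ x : Fin n → ℝ, ∀ i j : Fin n, M.Adj i j → pd v i k x * pd v j l x = 0) :
    ∀ k l : Fin n, k ≠ l → ¬ Mhat.Adj k l → ∀ i : Fin n,
      (∀ x : Fin n → ℝ, pd v i k x = 0) ∨ (∀ x : Fin n → ℝ, pd v i l x = 0) :=
  partials_do_not_switch_support_general M Mhat v w hv hw hleft π hiso h1 h2
end

section
/- Let G be a simple graph on the vertex set {1,…,n} and let v : ℝⁿ → ℝⁿ be a C¹ diffeomorphism such that at every point x ∈ ℝⁿ, the Jacobian matrix of v respects G: (∂v_i/∂x_j)(x) = 0 for every pair i ≠ j such that vertex j is not adjacent to some vertex in {i} ∪ (N(i) \ {j}). Then at every point y ∈ ℝⁿ, the Jacobian matrix of the inverse map v⁻¹ respects G as well: (∂(v⁻¹)_i/∂y_j)(y) = 0 for every pair i ≠ j such that vertex j is not adjacent to some vertex in {i} ∪ (N(i) \ {j}). -/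
/-- The pair `(i, j)` is "forbidden" for graph `G` if `i ≠ j` and vertex `j`
is not adjacent to some vertex in `{i} ∪ (N(i) \ {j})`. -/
def Forbidden {n : ℕ} (G : SimpleGraph (Fin n)) (i j : Fin n) : Prop :=
  i ≠ j ∧ ∃ m : Fin n, (m = i ∨ (G.Adj i m ∧ m ≠ j)) ∧ ¬ G.Adj j m

/-!
Say `p ≤ q` when the closed neighbourhood of `p` is contained in that of `q`; a pair `(p, q)` is
forbidden exactly when `p ≰ q`. Linear maps whose matrix vanishes off this preorder leave each
subspace of vectors supported on `{p | p ≤ j}` invariant, and in finite dimension an invertible map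
leaving a subspace invariant has an inverse that leaves it invariant too. By the chain rule the
Jacobian of `w` at `y` is a right inverse, hence the inverse, of the Jacobian of `v` at `w y`.
-/

open Function

theorem forbidden_iff_not_subset {n : ℕ} (G : SimpleGraph (Fin n)) {p q : Fin n} :
    Forbidden G p q ↔ ¬ insert p (G.neighborSet p) ⊆ insert q (G.neighborSet q) := by
  simp only [Forbidden, Set.subset_def, Set.mem_insert_iff, SimpleGraph.mem_neighborSet, not_forall]
  grind [G.adj_comm]

theorem LinearMap.mem_of_apply_mem_of_surjective {K V : Type*} [DivisionRing K] [AddCommGroup V]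
    [Module K V] [FiniteDimensional K V] {A : V →ₗ[K] V} (hA : Surjective A)
    {W : Submodule K V} (hW : ∀ x ∈ W, A x ∈ W) {x : V} (hx : A x ∈ W) : x ∈ W := by
  have hinj : Injective A := injective_iff_surjective.mpr hA
  obtain ⟨w, hw, hwx⟩ := (injOn_iff_surjOn hW).mp hinj.injOn hx
  exact hinj hwx ▸ hw

theorem Function.LeftInverse.fderiv {𝕜 E F : Type*} [NontriviallyNormedField 𝕜]
    [NormedAddCommGroup E] [NormedSpace 𝕜 E] [NormedAddCommGroup F] [NormedSpace 𝕜 F]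
    {f : E → F} {g : F → E} (hgf : LeftInverse g f) {x : E} (hf : DifferentiableAt 𝕜 f x)
    (hg : DifferentiableAt 𝕜 g (f x)) : LeftInverse (fderiv 𝕜 g (f x)) (fderiv 𝕜 f x) := by
  intro z
  rw [← ContinuousLinearMap.comp_apply, ← fderiv_comp x hg hf, hgf.comp_eq_id, fderiv_id]
  rfl

section VanishingOff

variable {ι K : Type*} [DivisionRing K] {r : ι → ι → Prop}

variable (K r) in
def vanishingOff (j : ι) : Submodule K (ι → K) :=
  Submodule.pi {p | ¬ r p j} fun _ => ⊥

theorem mem_vanishingOff {j : ι} {x : ι → K} :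
    x ∈ vanishingOff K r j ↔ ∀ p, ¬ r p j → x p = 0 := by
  simp [vanishingOff, Submodule.mem_pi]

variable [Fintype ι] [DecidableEq ι]

theorem apply_mem_vanishingOff (htrans : ∀ p q s, r p q → r q s → r p s)
    {A : (ι → K) →ₗ[K] (ι → K)} (hA : ∀ p q, ¬ r p q → A (Pi.single q 1) p = 0) {j : ι}
    {x : ι → K} (hx : x ∈ vanishingOff K r j) : A x ∈ vanishingOff K r j := by
  rw [mem_vanishingOff] at hx ⊢
  intro p hpj
  rw [pi_eq_sum_univ' x, map_sum, Finset.sum_apply]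
  refine Finset.sum_eq_zero fun q _ => ?_
  by_cases hqj : r q j
  · have hpq : ¬ r p q := fun hpq => hpj (htrans p q j hpq hqj)
    rw [map_smul, Pi.smul_apply, hA p q hpq, smul_zero]
  · rw [hx q hqj, zero_smul, map_zero, Pi.zero_apply]

theorem apply_single_eq_zero_of_rightInverse (hrefl : ∀ p, r p p)
    (htrans : ∀ p q s, r p q → r q s → r p s) {A B : (ι → K) →ₗ[K] (ι → K)}
    (hAB : RightInverse B A) (hA : ∀ p q, ¬ r p q → A (Pi.single q 1) p = 0)
    {p q : ι} (hpq : ¬ r p q) : B (Pi.single q 1) p = 0 := by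
  have hsingle : Pi.single q 1 ∈ vanishingOff K r q :=
    mem_vanishingOff.mpr fun p hp => Pi.single_eq_of_ne (by rintro rfl; exact hp (hrefl p)) 1
  have hB : B (Pi.single q 1) ∈ vanishingOff K r q :=
    A.mem_of_apply_mem_of_surjective hAB.surjective
      (fun _ => apply_mem_vanishingOff htrans hA) (by rwa [hAB])
  exact mem_vanishingOff.mp hB p hpq

end VanishingOff

theorem inverse_jacobian_respects_general
    {n : ℕ} (G : SimpleGraph (Fin n))
    (v w : (Fin n → ℝ) → (Fin n → ℝ))
    (hv : ContDiff ℝ 1 v) (hw : ContDiff ℝ 1 w)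
    (hright : Function.RightInverse w v)
    (hJ : ∀ x : Fin n → ℝ, ∀ i j : Fin n, Forbidden G i j → pd v i j x = 0) :
    ∀ y : Fin n → ℝ, ∀ i j : Fin n, Forbidden G i j → pd w i j y = 0 := by
  intro y i j hij
  have hvw : LeftInverse (fderiv ℝ v (w y)) (fderiv ℝ w y) :=
    LeftInverse.fderiv hright (hw.differentiable one_ne_zero y) (hv.differentiable one_ne_zero _)
  exact apply_single_eq_zero_of_rightInverse
    (r := fun p q => insert p (G.neighborSet p) ⊆ insert q (G.neighborSet q))
    (A := (fderiv ℝ v (w y)).toLinearMap) (B := (fderiv ℝ w y).toLinearMap)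
    (fun _ => subset_rfl) (fun _ _ _ => Set.Subset.trans) hvw
    (fun p q hpq => hJ (w y) p q ((forbidden_iff_not_subset G).mpr hpq))
    ((forbidden_iff_not_subset G).mp hij)

theorem inverse_jacobian_respects
    {n : ℕ} (G : SimpleGraph (Fin n))
    (v w : (Fin n → ℝ) → (Fin n → ℝ))
    (hv : ContDiff ℝ 1 v) (hw : ContDiff ℝ 1 w)
    (hleft : Function.LeftInverse w v) (hright : Function.RightInverse w v)
    (hJ : ∀ x : Fin n → ℝ, ∀ i j : Fin n, Forbidden G i j → pd v i j x = 0) :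
    ∀ y : Fin n → ℝ, ∀ i j : Fin n, Forbidden G i j → pd w i j y = 0 :=
  inverse_jacobian_respects_general G v w hv hw hright hJ
end

section
/- Let G be a simple graph on a finite vertex set, and let a₀, a₁, …, a_k, a_{k+1} be vertices with a_{k+1} = a₀ such that a_{m+1} ∈ Ψ(a_m) for every m = 0, 1, …, k. Then all the closed neighborhoods coincide: {a₀} ∪ N(a₀) = {a₁} ∪ N(a₁) = ⋯ = {a_k} ∪ N(a_k); consequently {a_m} ∪ Ψ(a_m) is the same set for every m = 0, 1, …, k. -/
lemma mem_closedNbhd {V : Type*} (G : SimpleGraph V) (i j : V) :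
    j ∈ closedNbhd G i ↔ j = i ∨ G.Adj i j := by
  simp [closedNbhd, SimpleGraph.mem_neighborSet]

lemma intimate_sub {V : Type*} (G : SimpleGraph V) {i j : V}
    (h : j ∈ intimateSet G i) : closedNbhd G i ⊆ closedNbhd G j := by
  obtain ⟨hne, hadj, hall⟩ := h
  intro x hx
  rw [mem_closedNbhd] at hx ⊢
  rcases hx with rfl | hx
  · exact Or.inr hadj.symm
  · rcases eq_or_ne x j with rfl | hxj
    · exact Or.inl rfl
    · exact Or.inr (hall x hx hxj)

lemma union_intimate_eq {V : Type*} (G : SimpleGraph V) (i : V) :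
    {i} ∪ intimateSet G i = {j | closedNbhd G i ⊆ closedNbhd G j} := by
  ext j
  simp only [Set.mem_union, Set.mem_singleton_iff, Set.mem_setOf_eq]
  constructor
  · rintro (rfl | h)
    · exact subset_rfl
    · exact intimate_sub G h
  · intro hsub
    rcases eq_or_ne j i with rfl | hne
    · exact Or.inl rfl
    · refine Or.inr ⟨hne, ?_, ?_⟩
      · have : i ∈ closedNbhd G j := hsub ((mem_closedNbhd G i i).2 (Or.inl rfl))
        rcases (mem_closedNbhd G j i).1 this with h | h
        · exact absurd h.symm hne
        · exact h.symm
      · intro x hx hxj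
        have : x ∈ closedNbhd G j := hsub ((mem_closedNbhd G i x).2 (Or.inr hx))
        rcases (mem_closedNbhd G j x).1 this with h | h
        · exact absurd h hxj
        · exact h

/-- Along a cycle a₀, a₁, …, a_{k+1} = a₀ with a_{m+1} ∈ Ψ(a_m), all the closed
neighborhoods coincide, and consequently all the sets {a_m} ∪ Ψ(a_m) coincide. -/
theorem cycle_intimate_closedNbhd_eq {V : Type*} [Fintype V]
    (G : SimpleGraph V) (k : ℕ) (a : ℕ → V)
    (hcycle : a (k + 1) = a 0)
    (hpsi : ∀ m : ℕ, m ≤ k → a (m + 1) ∈ intimateSet G (a m)) :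
    (∀ m : ℕ, m ≤ k → closedNbhd G (a m) = closedNbhd G (a 0)) ∧
    (∀ m : ℕ, m ≤ k →
      {a m} ∪ intimateSet G (a m) = {a 0} ∪ intimateSet G (a 0)) := by
  -- monotone chain: for m ≤ n ≤ k+1, cl(a m) ⊆ cl(a n)
  have chain : ∀ n : ℕ, n ≤ k + 1 → ∀ m : ℕ, m ≤ n →
      closedNbhd G (a m) ⊆ closedNbhd G (a n) := by
    intro n
    induction n with
    | zero => intro _ m hm; rw [Nat.le_zero.1 hm]
    | succ n ih =>
      intro hn m hm
      rcases Nat.eq_or_lt_of_le hm with rfl | hlt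
      · exact subset_rfl
      · have h1 : closedNbhd G (a m) ⊆ closedNbhd G (a n) :=
          ih (by omega) m (by omega)
        have h2 : closedNbhd G (a n) ⊆ closedNbhd G (a (n + 1)) :=
          intimate_sub G (hpsi n (by omega))
        exact h1.trans h2
  have heq : ∀ m : ℕ, m ≤ k → closedNbhd G (a m) = closedNbhd G (a 0) := by
    intro m hm
    apply Set.Subset.antisymm
    · have := chain (k + 1) le_rfl m (by omega)
      rwa [hcycle] at this
    · exact chain m (by omega) 0 (by omega)
  refine ⟨heq, fun m hm => ?_⟩
  rw [union_intimate_eq, union_intimate_eq, heq m hm]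
end

section
/- Let G be a simple graph on the vertex set {1,…,n} with intimate neighbor sets Ψ(i), and let u : ℝⁿ → ℝⁿ be a C¹ diffeomorphism. Suppose there exists a permutation σ of {1,…,n} such that for every i and every index l ∉ {i} ∪ Ψ(i), the partial derivative ∂u_{σ(i)}/∂z_l vanishes identically on ℝⁿ (i.e., each component u_{σ(i)} is solely a function of z_i and a subset of {z_r : r ∈ Ψ(i)}). Let π be any permutation of {1,…,n} such that for every i there exists a point z ∈ ℝⁿ with (∂u_{π(i)}/∂z_i)(z) ≠ 0. Then for every i and every index l ∉ {i} ∪ Ψ(i), the partial derivative ∂u_{π(i)}/∂z_l vanishes identically on ℝⁿ; that is, each u_{π(i)} is solely a function of z_i and a subset of {z_r : r ∈ Ψ(i)}, and it genuinely depends on z_i. -/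
theorem permuted_components_depend_only_on_intimate
    {n : ℕ} (G : SimpleGraph (Fin n))
    (u uinv : (Fin n → ℝ) → (Fin n → ℝ))
    (hu : ContDiff ℝ 1 u) (huinv : ContDiff ℝ 1 uinv)
    (hleft : Function.LeftInverse uinv u) (hright : Function.RightInverse uinv u)
    (σ : Equiv.Perm (Fin n))
    (hσ : ∀ i l : Fin n, l ∉ ({i} : Set (Fin n)) ∪ intimateSet G i →
      ∀ z : Fin n → ℝ, pd u (σ i) l z = 0)
    (π : Equiv.Perm (Fin n))
    (hπ : ∀ i : Fin n, ∃ z : Fin n → ℝ, pd u (π i) i z ≠ 0) :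
    ∀ i l : Fin n, l ∉ ({i} : Set (Fin n)) ∪ intimateSet G i →
      ∀ z : Fin n → ℝ, pd u (π i) l z = 0 := by
  classical
  -- closed neighborhoods as finsets
  set S : Fin n → Finset (Fin n) :=
    fun j => Finset.univ.filter (fun k => k = j ∨ G.Adj j k) with hS
  have memS : ∀ j k : Fin n, k ∈ S j ↔ (k = j ∨ G.Adj j k) := by
    intro j k; simp [hS]
  -- characterization of {j} ∪ Ψ(j)
  have lemA : ∀ j l : Fin n,
      l ∈ ({j} : Set (Fin n)) ∪ intimateSet G j ↔ S j ⊆ S l := by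
    intro j l
    constructor
    · rintro (h | ⟨hne, hadj, hall⟩)
      · rw [Set.mem_singleton_iff] at h; subst h; exact Finset.Subset.refl _
      · intro k hk
        rw [memS] at hk ⊢
        rcases hk with rfl | hk
        · exact Or.inr hadj.symm
        · by_cases hkl : k = l
          · exact Or.inl hkl
          · exact Or.inr (hall k hk hkl)
    · intro hsub
      by_cases hlj : l = j
      · exact Or.inl hlj
      · right
        have hjl : G.Adj l j := by
          have h := hsub ((memS j j).mpr (Or.inl rfl))
          rw [memS] at h
          rcases h with h | h
          · exact absurd h.symm hlj
          · exact h
        refine ⟨hlj, hjl.symm, ?_⟩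
        intro k hjk hkl
        have h := hsub ((memS j k).mpr (Or.inr hjk))
        rw [memS] at h
        rcases h with h | h
        · exact absurd h hkl
        · exact h
  set τ : Equiv.Perm (Fin n) := π.trans σ.symm with hτ
  have hστ : ∀ i, σ (τ i) = π i := by
    intro i; simp [hτ]
  have hdown : ∀ i, S (τ i) ⊆ S i := by
    intro i
    rw [← lemA]
    by_contra hmem
    obtain ⟨z, hz⟩ := hπ i
    have h := hσ (τ i) i hmem z
    rw [hστ] at h
    exact hz h
  have hcard : ∀ i, (S (τ i)).card = (S i).card := by
    by_contra hne
    push_neg at hne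
    obtain ⟨i0, hi0⟩ := hne
    have hlt : ∑ i, (S (τ i)).card < ∑ i, (S i).card :=
      Finset.sum_lt_sum (fun i _ => Finset.card_le_card (hdown i))
        ⟨i0, Finset.mem_univ _,
          lt_of_le_of_ne (Finset.card_le_card (hdown i0)) hi0⟩
    have heq : ∑ i, (S (τ i)).card = ∑ i, (S i).card :=
      Equiv.sum_comp τ (fun i => (S i).card)
    omega
  have hEq : ∀ i, S (τ i) = S i := fun i =>
    Finset.eq_of_subset_of_card_le (hdown i) (hcard i).ge
  intro i l hl z
  have h1 : l ∉ ({τ i} : Set (Fin n)) ∪ intimateSet G (τ i) := by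
    intro hmem
    exact hl ((lemA i l).mpr (hEq i ▸ (lemA (τ i) l).mp hmem))
  have h := hσ (τ i) l h1 z
  rwa [hστ] at h
end
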